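/- arXiv:1305.0324 — 2 statements merged into one kernel-verified Lean document; each statement's English description precedes it below -/
import Mathlib

section
/- There exists a constant C > 0 such that for all ξ₁, ξ₂ ∈ ℝ³ and all τ₁, τ₂ ∈ ℝ with |ξ₁| ≥ 2|ξ₂|, one has ⟨ξ₁⟩² ≤ C ( ⟨τ₁ + |ξ₁|²⟩ + ⟨τ₂ + |ξ₂|²⟩ + ⟨(τ₁ − τ₂) + |ξ₁ − ξ₂|⟩ ). -/
noncomputable section

open MeasureTheory Real Complex Filter

abbrev E3 : Type := EuclideanSpace ℝ (Fin 3)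

/-- Spatial Fourier transform on ℝ³, convention `e^{-i x·ξ}`. -/
def ftx (f : E3 → ℂ) (ξ : E3) : ℂ :=
  ∫ x : E3, Complex.exp (-Complex.I * ((inner ℝ x ξ : ℝ) : ℂ)) * f x

/-- Inverse spatial Fourier transform on ℝ³. -/
def iftx (f : E3 → ℂ) (x : E3) : ℂ :=
  (((2 * Real.pi) ^ 3 : ℝ) : ℂ)⁻¹ * ∫ ξ : E3, Complex.exp (Complex.I * ((inner ℝ x ξ : ℝ) : ℂ)) * f ξ

/-- Temporal Fourier transform, convention `e^{-i t τ}`. -/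
def ftt (f : ℝ → ℂ) (τ : ℝ) : ℂ :=
  ∫ t : ℝ, Complex.exp (-Complex.I * ((t * τ : ℝ) : ℂ)) * f t

/-- Inverse temporal Fourier transform. -/
def iftt (f : ℝ → ℂ) (t : ℝ) : ℂ :=
  ((2 * Real.pi : ℝ) : ℂ)⁻¹ * ∫ τ : ℝ, Complex.exp (Complex.I * ((t * τ : ℝ) : ℂ)) * f τ

/-- Space-time Fourier transform of `u(x,t)`, dual variables `(ξ,τ)`. -/
def ftxt (u : E3 → ℝ → ℂ) (ξ : E3) (τ : ℝ) : ℂ := ftt (fun t => ftx (fun x => u x t) ξ) τ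

/-- Inverse space-time Fourier transform. -/
def iftxt (u : E3 → ℝ → ℂ) (x : E3) (t : ℝ) : ℂ := iftt (fun τ => iftx (fun ξ => u ξ τ) x) t

/-- Japanese bracket of a real number. -/
def jpR (r : ℝ) : ℝ := Real.sqrt (1 + r ^ 2)

/-- Japanese bracket of a vector in ℝ³. -/
def jpV (ξ : E3) : ℝ := Real.sqrt (1 + ‖ξ‖ ^ 2)

/-- Sobolev `H^s` norm on ℝ³: `‖⟨ξ⟩^s f̂‖_{L²}`. -/
def sobNorm (s : ℝ) (f : E3 → ℂ) : ℝ :=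
  (∫ ξ : E3, (1 + ‖ξ‖ ^ 2) ^ s * ‖ftx f ξ‖ ^ 2) ^ ((1 : ℝ) / 2)

/-- Sobolev `H^s` norm on ℝ (time variable). -/
def sobNorm1 (s : ℝ) (f : ℝ → ℂ) : ℝ :=
  (∫ τ : ℝ, (1 + τ ^ 2) ^ s * ‖ftt f τ‖ ^ 2) ^ ((1 : ℝ) / 2)

/-- Schrödinger Bourgain norm `X_S^{s,b}`. -/
def XS (s b : ℝ) (u : E3 → ℝ → ℂ) : ℝ :=
  (∫ ξ : E3, ∫ τ : ℝ,
      (1 + ‖ξ‖ ^ 2) ^ s * (1 + (τ + ‖ξ‖ ^ 2) ^ 2) ^ b * ‖ftxt u ξ τ‖ ^ 2) ^ ((1 : ℝ) / 2)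

/-- Wave Bourgain norm `X_W^{s,b}`. -/
def XW (s b : ℝ) (u : E3 → ℝ → ℂ) : ℝ :=
  (∫ ξ : E3, ∫ τ : ℝ,
      (1 + ‖ξ‖ ^ 2) ^ s * (1 + (τ + ‖ξ‖) ^ 2) ^ b * ‖ftxt u ξ τ‖ ^ 2) ^ ((1 : ℝ) / 2)

/-- `L²(ℝ³×ℝ)` norm. -/
def L2norm (u : E3 → ℝ → ℂ) : ℝ := (∫ x : E3, ∫ t : ℝ, ‖u x t‖ ^ 2) ^ ((1 : ℝ) / 2)

/-- The free Schrödinger group `U(t) = e^{itΔ}`, Fourier multiplier `e^{-it|ξ|²}`. -/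
def Uop (t : ℝ) (f : E3 → ℂ) : E3 → ℂ :=
  iftx (fun ξ => Complex.exp (-Complex.I * ((t * ‖ξ‖ ^ 2 : ℝ) : ℂ)) * ftx f ξ)

/-- The reduced wave group `W(t) = e^{-it⟨∇⟩}`, Fourier multiplier `e^{-it⟨ξ⟩}`. -/
def Wop (t : ℝ) (f : E3 → ℂ) : E3 → ℂ :=
  iftx (fun ξ => Complex.exp (-Complex.I * ((t * Real.sqrt (1 + ‖ξ‖ ^ 2) : ℝ) : ℂ)) * ftx f ξ)

/-- `⟨∇⟩^{-1}`: Fourier multiplier with symbol `⟨ξ⟩⁻¹`. -/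
def bracketInv (f : E3 → ℂ) : E3 → ℂ :=
  iftx (fun ξ => (((Real.sqrt (1 + ‖ξ‖ ^ 2))⁻¹ : ℝ) : ℂ) * ftx f ξ)

/-- `⟨∇⟩`: Fourier multiplier with symbol `⟨ξ⟩`. -/
def bracketOp (f : E3 → ℂ) : E3 → ℂ :=
  iftx (fun ξ => ((Real.sqrt (1 + ‖ξ‖ ^ 2) : ℝ) : ℂ) * ftx f ξ)

/-- The Laplacian on ℝ³ (sum of second partial derivatives). -/
def laplacian {F : Type*} [NormedAddCommGroup F] [NormedSpace ℝ F] (f : E3 → F) (x : E3) : F :=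
  ∑ i : Fin 3,
    fderiv ℝ (fun y => fderiv ℝ f y (EuclideanSpace.single i (1 : ℝ))) x
      (EuclideanSpace.single i (1 : ℝ))

/-! The three modulations telescope: `(τ₁ + |ξ₁|²) - (τ₂ + |ξ₂|²) - ((τ₁ - τ₂) + |ξ₁ - ξ₂|)` is the
resonance function `|ξ₁|² - |ξ₂|² - |ξ₁ - ξ₂|`, which for `|ξ₂| ≤ |ξ₁|/2` is at least
`(3/4)|ξ₁|² - (3/2)|ξ₁|`. Each bracket dominates both `1` and the absolute value of its argument, so
the sum of the three brackets controls `⟨ξ₁⟩²` with `C = 8`. -/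

lemma one_le_jpR (r : ℝ) : 1 ≤ jpR r :=
  Real.one_le_sqrt.mpr (by nlinarith [sq_nonneg r])

lemma abs_le_jpR (r : ℝ) : |r| ≤ jpR r := by
  rw [← Real.sqrt_sq_eq_abs]
  exact Real.sqrt_le_sqrt (by linarith)

lemma jpV_sq (ξ : E3) : jpV ξ ^ 2 = 1 + ‖ξ‖ ^ 2 :=
  Real.sq_sqrt (by positivity)

lemma sub_sub_le_jpR_add_jpR_add_jpR (τ₁ τ₂ a b c : ℝ) :
    a - b - c ≤ jpR (τ₁ + a) + jpR (τ₂ + b) + jpR ((τ₁ - τ₂) + c) := by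
  have h₁ := (le_abs_self (τ₁ + a)).trans (abs_le_jpR _)
  have h₂ := (neg_le_abs (τ₂ + b)).trans (abs_le_jpR _)
  have h₃ := (neg_le_abs ((τ₁ - τ₂) + c)).trans (abs_le_jpR _)
  linarith

lemma resonance_ge_of_two_mul_norm_le {G : Type*} [SeminormedAddCommGroup G] {ξ η : G}
    (h : 2 * ‖η‖ ≤ ‖ξ‖) :
    3 / 4 * ‖ξ‖ ^ 2 - 3 / 2 * ‖ξ‖ ≤ ‖ξ‖ ^ 2 - ‖η‖ ^ 2 - ‖ξ - η‖ := by
  have hsub := norm_sub_le ξ η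
  nlinarith [norm_nonneg η]

/-- `⟨ξ₁⟩² ≲ ⟨τ₁+|ξ₁|²⟩ + ⟨τ₂+|ξ₂|²⟩ + ⟨(τ₁−τ₂)+|ξ₁−ξ₂|⟩` when `|ξ₁| ≥ 2|ξ₂|`. -/
theorem bracket_sq_le_sum_of_modulations :
    ∃ C : ℝ, 0 < C ∧
      ∀ (ξ₁ ξ₂ : E3) (τ₁ τ₂ : ℝ), ‖ξ₁‖ ≥ 2 * ‖ξ₂‖ →
        jpV ξ₁ ^ 2
          ≤ C * (jpR (τ₁ + ‖ξ₁‖ ^ 2) + jpR (τ₂ + ‖ξ₂‖ ^ 2) + jpR ((τ₁ - τ₂) + ‖ξ₁ - ξ₂‖)) := by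
  refine ⟨8, by norm_num, fun ξ₁ ξ₂ τ₁ τ₂ h => ?_⟩
  set S := jpR (τ₁ + ‖ξ₁‖ ^ 2) + jpR (τ₂ + ‖ξ₂‖ ^ 2) + jpR ((τ₁ - τ₂) + ‖ξ₁ - ξ₂‖)
  have hres : 3 / 4 * ‖ξ₁‖ ^ 2 - 3 / 2 * ‖ξ₁‖ ≤ S :=
    (resonance_ge_of_two_mul_norm_le h).trans (sub_sub_le_jpR_add_jpR_add_jpR _ _ _ _ _)
  have hthree : 3 ≤ S := by
    linarith [one_le_jpR (τ₁ + ‖ξ₁‖ ^ 2), one_le_jpR (τ₂ + ‖ξ₂‖ ^ 2),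
      one_le_jpR ((τ₁ - τ₂) + ‖ξ₁ - ξ₂‖)]
  -- `1 + x² < 4 ((3/4) x² - (3/2) x) + 4 · 3` since `2x² - 6x + 11 > 0`
  rw [jpV_sq]
  nlinarith [sq_nonneg (‖ξ₁‖ - 3 / 2)]
end
end

section
/- Let a > 0, θ₀ ∈ ℝ, t* ∈ ℝ, and let P, N : ℝ² → ℝ be smooth radial functions (P(x) = p(|x|), N(x) = ν(|x|) for smooth profiles p, ν) satisfying, for all η = |x|, ΔP − P − NP = 0 and a²( η² ν''(η) + 6η ν'(η) + 6ν(η) ) − ΔN = Δ(P²), where Δ denotes the two-dimensional Laplacian. Define, for t < t* and x ∈ ℝ²: ψ(x,t) = (a(t*−t))^{−1} P( x/(a(t*−t)) ) exp( i( θ₀ + 1/(a²(t*−t)) − |x|²/(4(t*−t)) ) ) and n(x,t) = (a(t*−t))^{−2} N( x/(a(t*−t)) ). Then (ψ, n) solves the two-dimensional Zakharov system i∂ₜψ + Δψ = nψ, ∂ₜₜn − Δn = Δ|ψ|² pointwise on ℝ² × (−∞, t*). -/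
noncomputable section

open Real Complex

abbrev E2 : Type := EuclideanSpace ℝ (Fin 2)

/-- The Laplacian on ℝ² (sum of second partial derivatives). -/
def laplacian2 {F : Type*} [NormedAddCommGroup F] [NormedSpace ℝ F] (f : E2 → F) (x : E2) : F :=
  ∑ i : Fin 2,
    fderiv ℝ (fun y => fderiv ℝ f y (EuclideanSpace.single i (1 : ℝ))) x
      (EuclideanSpace.single i (1 : ℝ))

/-! ### Auxiliary toolkit -/

section Toolkit

variable {F : Type*} [NormedAddCommGroup F] [NormedSpace ℝ F]

lemma sum_coord (x : E2) : ∑ i, x i • EuclideanSpace.single i (1:ℝ) = x := by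
  ext j
  fin_cases j <;> simp [EuclideanSpace.single_apply, Finset.sum_apply]

lemma hasFDerivAt_scale (f : E2 → F) (c : ℝ) (z : E2) (hf : DifferentiableAt ℝ f (c • z)) :
    HasFDerivAt (fun w => f (c • w))
      ((fderiv ℝ f (c • z)).comp (c • ContinuousLinearMap.id ℝ E2)) z := by
  have h1 : HasFDerivAt (fun w : E2 => c • w) (c • ContinuousLinearMap.id ℝ E2) z := by
    exact (c • ContinuousLinearMap.id ℝ E2).hasFDerivAt (x := z)
  exact hf.hasFDerivAt.comp z h1

lemma fderiv_scale (f : E2 → F) (c : ℝ) (z : E2) (hf : DifferentiableAt ℝ f (c • z)) (v : E2) :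
    fderiv ℝ (fun w => f (c • w)) z v = c • fderiv ℝ f (c • z) v := by
  rw [(hasFDerivAt_scale f c z hf).fderiv]
  simp [ContinuousLinearMap.map_smul]

lemma diffAt_scale (f : E2 → F) (c : ℝ) (z : E2) (hf : DifferentiableAt ℝ f (c • z)) :
    DifferentiableAt ℝ (fun w => f (c • w)) z := (hasFDerivAt_scale f c z hf).differentiableAt

lemma pd_contDiff' {f : E2 → ℝ} (hf : ContDiff ℝ (⊤ : ℕ∞) f) (v : E2) :
    ContDiff ℝ (⊤ : ℕ∞) (fun z => fderiv ℝ f z v) :=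
  (hf.fderiv_right (by simp)).clm_apply contDiff_const

lemma fderiv_dir_sum (f : E2 → ℝ) (y x : E2) :
    fderiv ℝ f y x = ∑ i : Fin 2, fderiv ℝ f y (EuclideanSpace.single i (1:ℝ)) * x i := by
  conv_lhs => rw [← sum_coord x]
  rw [map_sum]
  refine Finset.sum_congr rfl fun i _ => ?_
  rw [map_smul]
  simp [mul_comm]

lemma lap_scale (f : E2 → ℝ) (hf : ContDiff ℝ (⊤ : ℕ∞) f) (c k : ℝ) (x : E2) :
    laplacian2 (fun z => k * f (c • z)) x = k * c ^ 2 * laplacian2 f (c • x) := by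
  have hfd := hf.differentiable (by simp)
  have h1 : ∀ (i : Fin 2) (z : E2), fderiv ℝ (fun w => k * f (c • w)) z (EuclideanSpace.single i (1:ℝ))
      = k * c * fderiv ℝ f (c • z) (EuclideanSpace.single i (1:ℝ)) := by
    intro i z
    rw [fderiv_const_mul (diffAt_scale f c z (hfd _)), ContinuousLinearMap.smul_apply,
      fderiv_scale f c z (hfd _)]
    simp; ring
  unfold laplacian2
  rw [Finset.mul_sum]
  refine Finset.sum_congr rfl fun i _ => ?_
  have hg : ContDiff ℝ (⊤ : ℕ∞) (fun z => fderiv ℝ f z (EuclideanSpace.single i (1:ℝ))) :=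
    pd_contDiff' hf _
  have : (fun z => fderiv ℝ (fun w => k * f (c • w)) z (EuclideanSpace.single i (1:ℝ)))
      = fun z => k * c * (fun z' => fderiv ℝ f z' (EuclideanSpace.single i (1:ℝ))) (c • z) := by
    funext z; exact h1 i z
  rw [this, fderiv_const_mul (diffAt_scale _ c x ((hg.differentiable (by simp)) _)),
    ContinuousLinearMap.smul_apply, fderiv_scale _ c x ((hg.differentiable (by simp)) _)]
  simp; ring

end Toolkit

/-! ### Radial identities -/

section Radial

variable {N : E2 → ℝ} {ν : ℝ → ℝ}

lemma radial_d1 (hNsmooth : ContDiff ℝ (⊤ : ℕ∞) N) (hνsmooth : ContDiff ℝ (⊤ : ℕ∞) ν)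
    (hNrad : ∀ x : E2, N x = ν ‖x‖) (y : E2) :
    fderiv ℝ N y y = ‖y‖ * deriv ν ‖y‖ := by
  rcases eq_or_ne y 0 with rfl | hy
  · simp
  · have hyn : (0:ℝ) < ‖y‖ := norm_pos_iff.mpr hy
    have hd1 : ∀ s : ℝ, HasDerivAt (fun s : ℝ => N (s • y)) (fderiv ℝ N (s • y) y) s := by
      intro s
      have h1 : HasDerivAt (fun s : ℝ => s • y) y s := by
        simpa using (hasDerivAt_id s).smul_const y
      simpa [Function.comp_def] using ((hNsmooth.differentiable (by simp) _).hasFDerivAt.comp_hasDerivAt s h1)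
    have hd2 : ∀ s : ℝ, HasDerivAt (fun s : ℝ => ν (s * ‖y‖)) (deriv ν (s * ‖y‖) * ‖y‖) s := by
      intro s
      have h1 : HasDerivAt (fun s : ℝ => s * ‖y‖) ‖y‖ s := by
        simpa using (hasDerivAt_id s).mul_const ‖y‖
      exact ((hνsmooth.differentiable (by simp) _).hasDerivAt).comp s h1
    have heq : (fun s : ℝ => N (s • y)) =ᶠ[nhds (1:ℝ)] (fun s : ℝ => ν (s * ‖y‖)) := by
      filter_upwards [eventually_gt_nhds (by norm_num : (0:ℝ) < 1)] with s hs
      rw [hNrad, norm_smul, Real.norm_eq_abs, abs_of_pos hs]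
    have := heq.deriv_eq
    rw [(hd1 1).deriv, (hd2 1).deriv] at this
    simpa [mul_comm] using this

lemma radial_d1' (hNsmooth : ContDiff ℝ (⊤ : ℕ∞) N) (hνsmooth : ContDiff ℝ (⊤ : ℕ∞) ν)
    (hNrad : ∀ x : E2, N x = ν ‖x‖) (y : E2) (s : ℝ) (hs : 0 < s) :
    fderiv ℝ N (s • y) y = ‖y‖ * deriv ν (s * ‖y‖) := by
  have := radial_d1 hNsmooth hνsmooth hNrad (s • y)
  rw [ContinuousLinearMap.map_smul] at this
  rw [norm_smul, Real.norm_eq_abs, abs_of_pos hs] at this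
  have hs' : s ≠ 0 := ne_of_gt hs
  field_simp at this ⊢
  rcases eq_or_ne y 0 with rfl | hy
  · simp
  · rw [smul_eq_mul, mul_assoc] at this; exact mul_left_cancel₀ hs' this

lemma radial_d2 (hNsmooth : ContDiff ℝ (⊤ : ℕ∞) N) (hνsmooth : ContDiff ℝ (⊤ : ℕ∞) ν)
    (hNrad : ∀ x : E2, N x = ν ‖x‖) (y : E2) :
    fderiv ℝ (fun z => fderiv ℝ N z y) y y = ‖y‖ ^ 2 * deriv (deriv ν) ‖y‖ := by
  rcases eq_or_ne y 0 with rfl | hy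
  · simp
  · have hyn : (0:ℝ) < ‖y‖ := norm_pos_iff.mpr hy
    have hW : ContDiff ℝ (⊤ : ℕ∞) (fun z => fderiv ℝ N z y) :=
      (hNsmooth.fderiv_right (by simp)).clm_apply contDiff_const
    have hν' : Differentiable ℝ (deriv ν) := by
      have h := (contDiff_infty_iff_deriv.mp (hνsmooth.of_le (by simp))).2
      exact h.differentiable (by simp)
    have hd1 : HasDerivAt (fun s : ℝ => fderiv ℝ N (s • y) y)
        (fderiv ℝ (fun z => fderiv ℝ N z y) y y) 1 := by
      have h1 : HasDerivAt (fun s : ℝ => s • y) y 1 := by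
        simpa using (hasDerivAt_id (1:ℝ)).smul_const y
      have := ((hW.differentiable (by simp) _).hasFDerivAt.comp_hasDerivAt 1 h1)
      simpa [Function.comp_def] using this
    have hd2 : HasDerivAt (fun s : ℝ => ‖y‖ * deriv ν (s * ‖y‖))
        (‖y‖ * (deriv (deriv ν) ‖y‖ * ‖y‖)) 1 := by
      have h1 : HasDerivAt (fun s : ℝ => s * ‖y‖) ‖y‖ 1 := by
        simpa using (hasDerivAt_id (1:ℝ)).mul_const ‖y‖
      have h2 := ((hν' _).hasDerivAt).comp 1 h1
      simpa using (h2.const_mul ‖y‖)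
    have heq : (fun s : ℝ => fderiv ℝ N (s • y) y) =ᶠ[nhds (1:ℝ)]
        (fun s : ℝ => ‖y‖ * deriv ν (s * ‖y‖)) := by
      filter_upwards [eventually_gt_nhds (by norm_num : (0:ℝ) < 1)] with s hs
      exact radial_d1' hNsmooth hνsmooth hNrad y s hs
    have := heq.deriv_eq
    rw [hd1.deriv, hd2.deriv] at this
    rw [this]; ring

lemma fderiv2_clm (hN : ContDiff ℝ (⊤ : ℕ∞) N) (y v : E2) :
    fderiv ℝ (fun z => fderiv ℝ N z v) y = (fderiv ℝ (fderiv ℝ N) y).flip v := by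
  have hd : DifferentiableAt ℝ (fderiv ℝ N) y :=
    ((hN.fderiv_right (m := (⊤ : ℕ∞)) (by simp)).differentiable (by simp)) y
  have := fderiv_clm_apply (c := fderiv ℝ N) (u := fun _ => v) hd (differentiableAt_const v)
  rw [show (fun z => fderiv ℝ N z v) = (fun z => (fderiv ℝ N z) ((fun _ : E2 => v) z)) from rfl,
    this]
  simp

lemma second_smul (c : ℝ) (x : E2) :
    (fderiv ℝ (fderiv ℝ N) (c • x) (c • x)) (c • x)
      = c ^ 2 * ((fderiv ℝ (fderiv ℝ N) (c • x) x) x) := by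
  simp only [ContinuousLinearMap.map_smul, ContinuousLinearMap.smul_apply, smul_eq_mul]
  ring

end Radial

/-! ### Time derivatives -/

lemma c_hasDeriv (a tstar : ℝ) (ha : 0 < a) (s : ℝ) (hs : s < tstar) :
    HasDerivAt (fun s' : ℝ => (a * (tstar - s'))⁻¹) (a * ((a * (tstar - s))⁻¹) ^ 2) s := by
  have hu : HasDerivAt (fun s' : ℝ => a * (tstar - s')) (-a) s := by
    simpa using (((hasDerivAt_id s).const_sub tstar).const_mul a)
  have hpos : 0 < tstar - s := sub_pos.mpr hs
  have hne : a * (tstar - s) ≠ 0 := by positivity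
  have := hu.fun_inv hne
  refine this.congr_deriv ?_
  field_simp

section NTime

variable {N : E2 → ℝ}

lemma nprofile_hasDeriv (a tstar : ℝ) (ha : 0 < a) (hN : ContDiff ℝ (⊤ : ℕ∞) N) (x : E2)
    (s : ℝ) (hs : s < tstar) :
    HasDerivAt (fun s' : ℝ => N ((a * (tstar - s'))⁻¹ • x))
      (a * ((a * (tstar - s))⁻¹) ^ 2 * fderiv ℝ N ((a * (tstar - s))⁻¹ • x) x) s := by
  have h1 : HasDerivAt (fun s' : ℝ => (a * (tstar - s'))⁻¹ • x)
      ((a * ((a * (tstar - s))⁻¹) ^ 2) • x) s := (c_hasDeriv a tstar ha s hs).smul_const x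
  have h2 := (hN.differentiable (by simp) _).hasFDerivAt.comp_hasDerivAt s h1
  simpa [mul_assoc, Function.comp_def] using h2

lemma W_hasDeriv (a tstar : ℝ) (ha : 0 < a) (hN : ContDiff ℝ (⊤ : ℕ∞) N) (x : E2)
    (s : ℝ) (hs : s < tstar) :
    HasDerivAt (fun s' : ℝ => fderiv ℝ N ((a * (tstar - s'))⁻¹ • x) x)
      (a * ((a * (tstar - s))⁻¹) ^ 2 *
        fderiv ℝ (fun z => fderiv ℝ N z x) ((a * (tstar - s))⁻¹ • x) x) s := by
  have hW : ContDiff ℝ (⊤ : ℕ∞) (fun z => fderiv ℝ N z x) :=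
    (hN.fderiv_right (by simp)).clm_apply contDiff_const
  have h1 : HasDerivAt (fun s' : ℝ => (a * (tstar - s'))⁻¹ • x)
      ((a * ((a * (tstar - s))⁻¹) ^ 2) • x) s := (c_hasDeriv a tstar ha s hs).smul_const x
  have h2 := (hW.differentiable (by simp) _).hasFDerivAt.comp_hasDerivAt s h1
  simpa [mul_assoc, Function.comp_def] using h2

lemma g_hasDeriv (a tstar : ℝ) (ha : 0 < a) (hN : ContDiff ℝ (⊤ : ℕ∞) N) (x : E2)
    (s : ℝ) (hs : s < tstar) :
    HasDerivAt (fun s' : ℝ => ((a * (tstar - s')) ^ 2)⁻¹ * N ((a * (tstar - s'))⁻¹ • x))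
      (2 * a * ((a * (tstar - s))⁻¹) ^ 3 * N ((a * (tstar - s))⁻¹ • x)
        + a * ((a * (tstar - s))⁻¹) ^ 4 * fderiv ℝ N ((a * (tstar - s))⁻¹ • x) x) s := by
  have hsq : HasDerivAt (fun s' : ℝ => ((a * (tstar - s')) ^ 2)⁻¹)
      (2 * a * ((a * (tstar - s))⁻¹) ^ 3) s := by
    have h0 := ((c_hasDeriv a tstar ha s hs).fun_pow 2)
    have heq : (fun s' : ℝ => ((a * (tstar - s')) ^ 2)⁻¹)
        = fun s' : ℝ => ((a * (tstar - s'))⁻¹) ^ 2 := by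
      funext s'; rw [inv_pow]
    rw [heq]
    refine h0.congr_deriv ?_
    ring
  have := hsq.fun_mul (nprofile_hasDeriv a tstar ha hN x s hs)
  refine this.congr_deriv ?_
  simp only [← inv_pow]
  ring

lemma n_second_deriv (a tstar : ℝ) (ha : 0 < a) (hN : ContDiff ℝ (⊤ : ℕ∞) N) (x : E2)
    (n : E2 → ℝ → ℝ)
    (hn : ∀ (s : ℝ), s < tstar → n x s = ((a * (tstar - s)) ^ 2)⁻¹ * N ((a * (tstar - s))⁻¹ • x))
    (t : ℝ) (ht : t < tstar) :
    deriv (fun s => deriv (fun s' => n x s') s) t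
      = 6 * a ^ 2 * ((a * (tstar - t))⁻¹) ^ 4 * N ((a * (tstar - t))⁻¹ • x)
        + 6 * a ^ 2 * ((a * (tstar - t))⁻¹) ^ 5 * fderiv ℝ N ((a * (tstar - t))⁻¹ • x) x
        + a ^ 2 * ((a * (tstar - t))⁻¹) ^ 6 *
            fderiv ℝ (fun z => fderiv ℝ N z x) ((a * (tstar - t))⁻¹ • x) x := by
  have hopen : ∀ s : ℝ, s < tstar → (fun s' => n x s') =ᶠ[nhds s] (fun s' =>
      ((a * (tstar - s')) ^ 2)⁻¹ * N ((a * (tstar - s'))⁻¹ • x)) := by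
    intro s hs
    filter_upwards [eventually_lt_nhds hs] with s' hs'
    exact hn s' hs'
  have hd1 : ∀ s : ℝ, s < tstar → deriv (fun s' => n x s') s
      = 2 * a * ((a * (tstar - s))⁻¹) ^ 3 * N ((a * (tstar - s))⁻¹ • x)
        + a * ((a * (tstar - s))⁻¹) ^ 4 * fderiv ℝ N ((a * (tstar - s))⁻¹ • x) x := by
    intro s hs
    rw [(hopen s hs).deriv_eq, (g_hasDeriv a tstar ha hN x s hs).deriv]
  have heq2 : (fun s => deriv (fun s' => n x s') s) =ᶠ[nhds t] (fun s =>
      2 * a * ((a * (tstar - s))⁻¹) ^ 3 * N ((a * (tstar - s))⁻¹ • x)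
        + a * ((a * (tstar - s))⁻¹) ^ 4 * fderiv ℝ N ((a * (tstar - s))⁻¹ • x) x) := by
    filter_upwards [eventually_lt_nhds ht] with s hs
    exact hd1 s hs
  rw [heq2.deriv_eq]
  have h1 := ((((c_hasDeriv a tstar ha t ht).fun_pow 3).const_mul (2*a)).fun_mul
      (nprofile_hasDeriv a tstar ha hN x t ht)).fun_add
    (((((c_hasDeriv a tstar ha t ht).fun_pow 4).const_mul a)).fun_mul (W_hasDeriv a tstar ha hN x t ht))
  rw [h1.deriv]
  ring

end NTime

/-! ### Structure functions for the Schrödinger part -/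

def Qf : E2 → ℝ := fun z => ∑ i, (z i) ^ 2

def Ef (μ K : ℝ) : E2 → ℂ := fun z => Complex.exp (Complex.I * ((K - μ * Qf z : ℝ) : ℂ))

lemma norm_sq_Qf (w : E2) : ‖w‖ ^ 2 = Qf w := by
  rw [EuclideanSpace.norm_eq, Real.sq_sqrt (by positivity)]
  unfold Qf
  refine Finset.sum_congr rfl fun i _ => ?_
  exact sq_abs _

lemma Qf_hasFDerivAt (z : E2) :
    HasFDerivAt Qf (∑ i : Fin 2, (2 * z i) • (EuclideanSpace.proj (𝕜 := ℝ) i)) z := by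
  have : ∀ i : Fin 2, HasFDerivAt (fun w : E2 => (w i) ^ 2)
      ((2 * z i) • (EuclideanSpace.proj (𝕜 := ℝ) i)) z := by
    intro i
    have h1 : HasFDerivAt (fun w : E2 => w i) (EuclideanSpace.proj (𝕜 := ℝ) i) z :=
      (EuclideanSpace.proj (𝕜 := ℝ) i).hasFDerivAt
    have h2 := h1.fun_mul h1
    have heq : (fun w : E2 => (w i) ^ 2) = fun w : E2 => w i * w i := by
      funext w; ring
    rw [heq]
    refine h2.congr_fderiv ?_
    ext v; simp; ring
  exact HasFDerivAt.fun_sum (fun i _ => this i)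

lemma Qf_diff : Differentiable ℝ Qf := fun z => (Qf_hasFDerivAt z).differentiableAt

lemma Qf_pd (z : E2) (j : Fin 2) :
    fderiv ℝ Qf z (EuclideanSpace.single j (1:ℝ)) = 2 * z j := by
  rw [(Qf_hasFDerivAt z).fderiv]
  rw [ContinuousLinearMap.sum_apply]
  have : ∀ i : Fin 2, ((2 * z i) • (EuclideanSpace.proj (𝕜 := ℝ) i))
      (EuclideanSpace.single j (1:ℝ)) = if i = j then 2 * z i else 0 := by
    intro i
    simp [EuclideanSpace.single_apply]
  rw [Finset.sum_congr rfl (fun i _ => this i)]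
  simp

lemma Ef_hasFDerivAt (μ K : ℝ) (z : E2) :
    HasFDerivAt (Ef μ K)
      ((Ef μ K z * (Complex.I * (-μ : ℂ))) • (Complex.ofRealCLM.comp (fderiv ℝ Qf z))) z := by
  have hr : HasFDerivAt (fun w : E2 => K - μ * Qf w) ((-μ) • fderiv ℝ Qf z) z := by
    have := ((Qf_hasFDerivAt z).const_mul μ).const_sub K
    refine this.congr_fderiv ?_
    ext v; simp [(Qf_hasFDerivAt z).fderiv]; ring
  have hrC : HasFDerivAt (fun w : E2 => ((K - μ * Qf w : ℝ) : ℂ))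
      (Complex.ofRealCLM.comp ((-μ) • fderiv ℝ Qf z)) z :=
    Complex.ofRealCLM.hasFDerivAt.comp z hr
  have hi : HasFDerivAt (fun w : E2 => Complex.I * ((K - μ * Qf w : ℝ) : ℂ))
      (Complex.I • (Complex.ofRealCLM.comp ((-μ) • fderiv ℝ Qf z))) z := hrC.const_mul Complex.I
  have := hi.cexp
  refine this.congr_fderiv ?_
  ext v
  simp [Ef]
  ring

lemma Ef_diff (μ K : ℝ) : Differentiable ℝ (Ef μ K) :=
  fun z => (Ef_hasFDerivAt μ K z).differentiableAt

lemma Ef_pd (μ K : ℝ) (z : E2) (j : Fin 2) :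
    fderiv ℝ (Ef μ K) z (EuclideanSpace.single j (1:ℝ))
      = Ef μ K z * (Complex.I * (((-2) * μ * z j : ℝ) : ℂ)) := by
  rw [(Ef_hasFDerivAt μ K z).fderiv]
  simp [Qf_pd]
  push_cast
  ring

lemma pdC_scale (g : E2 → ℝ) (hg : Differentiable ℝ g) (c : ℝ) (z : E2) (v : E2) :
    fderiv ℝ (fun w => ((g (c • w) : ℝ) : ℂ)) z v = ((c * fderiv ℝ g (c • z) v : ℝ) : ℂ) := by
  have h1 : HasFDerivAt (fun w : E2 => c • w) (c • ContinuousLinearMap.id ℝ E2) z := by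
    exact (c • ContinuousLinearMap.id ℝ E2).hasFDerivAt (x := z)
  have h2 := (hg (c • z)).hasFDerivAt.comp z h1
  have h3 : HasFDerivAt (fun w => ((g (c • w) : ℝ) : ℂ))
      (Complex.ofRealCLM.comp ((fderiv ℝ g (c • z)).comp (c • ContinuousLinearMap.id ℝ E2))) z :=
    Complex.ofRealCLM.hasFDerivAt.comp z h2
  rw [h3.fderiv]
  simp

lemma diffC_scale (g : E2 → ℝ) (hg : Differentiable ℝ g) (c : ℝ) (z : E2) :
    DifferentiableAt ℝ (fun w => ((g (c • w) : ℝ) : ℂ)) z := by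
  have h1 : HasFDerivAt (fun w : E2 => c • w) (c • ContinuousLinearMap.id ℝ E2) z := by
    exact (c • ContinuousLinearMap.id ℝ E2).hasFDerivAt (x := z)
  exact (Complex.ofRealCLM.hasFDerivAt.comp z ((hg (c • z)).hasFDerivAt.comp z h1)).differentiableAt

lemma pd_mulC (f g : E2 → ℂ) (z : E2) (hf : DifferentiableAt ℝ f z)
    (hg : DifferentiableAt ℝ g z) (v : E2) :
    fderiv ℝ (fun w => f w * g w) z v = fderiv ℝ f z v * g z + f z * fderiv ℝ g z v := by
  rw [fderiv_fun_mul hf hg]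
  simp
  ring

lemma pdC_coord (i : Fin 2) (z : E2) (j : Fin 2) :
    fderiv ℝ (fun w : E2 => ((w i : ℝ) : ℂ)) z (EuclideanSpace.single j (1:ℝ))
      = if i = j then 1 else 0 := by
  have h1 : HasFDerivAt (fun w : E2 => w i) (EuclideanSpace.proj (𝕜 := ℝ) i) z :=
    (EuclideanSpace.proj (𝕜 := ℝ) i).hasFDerivAt
  have h2 : HasFDerivAt (fun w : E2 => ((w i : ℝ) : ℂ))
      (Complex.ofRealCLM.comp (EuclideanSpace.proj (𝕜 := ℝ) i)) z :=
    Complex.ofRealCLM.hasFDerivAt.comp z h1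
  rw [h2.fderiv]
  simp [EuclideanSpace.single_apply]
  split <;> simp

lemma diffC_coord (i : Fin 2) (z : E2) :
    DifferentiableAt ℝ (fun w : E2 => ((w i : ℝ) : ℂ)) z :=
  (Complex.ofRealCLM.hasFDerivAt.comp z
    ((EuclideanSpace.proj (𝕜 := ℝ) i).hasFDerivAt (x := z))).differentiableAt

/-! ### Laplacian of the Schrödinger profile -/

section lapH
variable {P : E2 → ℝ} (hP : ContDiff ℝ (⊤ : ℕ∞) P) (c μ K : ℝ)

include hP in
lemma h_pd (z : E2) (i : Fin 2) :
    fderiv ℝ (fun w => (c:ℂ) * ((P (c • w) : ℝ) : ℂ) * Ef μ K w) z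
        (EuclideanSpace.single i (1:ℝ))
      = (c:ℂ)^2 * (((fderiv ℝ P (c • z) (EuclideanSpace.single i (1:ℝ)) : ℝ)) : ℂ) * Ef μ K z
        + ((c:ℂ) * (Complex.I * (((-2) * μ : ℝ) : ℂ))) *
            ((((P (c • z) : ℝ)) : ℂ) * Ef μ K z * (((z i : ℝ)) : ℂ)) := by
  have hPd := hP.differentiable (by simp)
  have hA : DifferentiableAt ℝ (fun w => (c:ℂ) * ((P (c • w) : ℝ) : ℂ)) z :=
    (diffC_scale P hPd c z).const_mul (c:ℂ)
  have hpd := pd_mulC (fun w => (c:ℂ) * ((P (c • w) : ℝ) : ℂ)) (Ef μ K) z hA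
    ((Ef_diff μ K) z) (EuclideanSpace.single i (1:ℝ))
  rw [show (fun w => (c:ℂ) * ((P (c • w) : ℝ) : ℂ) * Ef μ K w)
      = (fun w => ((fun w' => (c:ℂ) * ((P (c • w') : ℝ) : ℂ)) w) * Ef μ K w) from rfl, hpd]
  rw [fderiv_const_mul (diffC_scale P hPd c z) (c:ℂ)]
  rw [ContinuousLinearMap.smul_apply, pdC_scale P hPd c z, Ef_pd]
  simp only [smul_eq_mul]
  push_cast
  ring

include hP in
lemma lap_h (x : E2) :
    laplacian2 (fun w => (c:ℂ) * ((P (c • w) : ℝ) : ℂ) * Ef μ K w) x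
      = Ef μ K x * ( ((c^3 * laplacian2 P (c • x) : ℝ) : ℂ)
          + Complex.I * (((-4) * μ * c^2 * fderiv ℝ P (c • x) x : ℝ) : ℂ)
          + (((-4) * μ^2 * c * Qf x * P (c • x) : ℝ) : ℂ)
          + Complex.I * (((-4) * μ * c * P (c • x) : ℝ) : ℂ) ) := by
  have hPd := hP.differentiable (by simp)
  unfold laplacian2
  have hstep : ∀ i : Fin 2,
      fderiv ℝ (fun z => fderiv ℝ (fun w => (c:ℂ) * ((P (c • w) : ℝ) : ℂ) * Ef μ K w) z
          (EuclideanSpace.single i (1:ℝ))) x (EuclideanSpace.single i (1:ℝ))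
      = Ef μ K x * ( (c:ℂ)^3 *
            ((fderiv ℝ (fun w => fderiv ℝ P w (EuclideanSpace.single i (1:ℝ))) (c • x)
              (EuclideanSpace.single i (1:ℝ)) : ℝ) : ℂ)
          + Complex.I * (((-4) * μ * c^2 : ℝ) : ℂ) *
              ((fderiv ℝ P (c • x) (EuclideanSpace.single i (1:ℝ)) : ℝ) : ℂ) * ((x i : ℝ) : ℂ)
          + (((-4) * μ^2 * c : ℝ) : ℂ) * ((x i : ℝ) : ℂ)^2 * ((P (c • x) : ℝ) : ℂ)
          + Complex.I * (((-2) * μ * c : ℝ) : ℂ) * ((P (c • x) : ℝ) : ℂ) ) := by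
    intro i
    have hfun : (fun z => fderiv ℝ (fun w => (c:ℂ) * ((P (c • w) : ℝ) : ℂ) * Ef μ K w) z
          (EuclideanSpace.single i (1:ℝ)))
        = fun z => (c:ℂ)^2 *
              (((fderiv ℝ P (c • z) (EuclideanSpace.single i (1:ℝ)) : ℝ) : ℂ) * Ef μ K z)
            + ((c:ℂ) * (Complex.I * (((-2) * μ : ℝ) : ℂ))) *
                ((((P (c • z) : ℝ) : ℂ) * Ef μ K z) * ((z i : ℝ) : ℂ)) := by
      funext z
      rw [h_pd hP c μ K z i]
      ring
    rw [hfun]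
    have hPi : Differentiable ℝ (fun w => fderiv ℝ P w (EuclideanSpace.single i (1:ℝ))) :=
      (pd_contDiff' hP _).differentiable (by simp)
    have dB : DifferentiableAt ℝ
        (fun z => ((fderiv ℝ P (c • z) (EuclideanSpace.single i (1:ℝ)) : ℝ) : ℂ)) x := by
      exact diffC_scale _ hPi c x
    have dPC : DifferentiableAt ℝ (fun z => ((P (c • z) : ℝ) : ℂ)) x := diffC_scale P hPd c x
    have dE : DifferentiableAt ℝ (Ef μ K) x := Ef_diff μ K x
    have dX : DifferentiableAt ℝ (fun z : E2 => ((z i : ℝ) : ℂ)) x := diffC_coord i x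
    have dBE : DifferentiableAt ℝ (fun z =>
        ((fderiv ℝ P (c • z) (EuclideanSpace.single i (1:ℝ)) : ℝ) : ℂ) * Ef μ K z) x :=
      dB.mul dE
    have dPCE : DifferentiableAt ℝ (fun z => (((P (c • z) : ℝ) : ℂ) * Ef μ K z)) x := dPC.mul dE
    have dPCEX : DifferentiableAt ℝ
        (fun z => (((P (c • z) : ℝ) : ℂ) * Ef μ K z) * ((z i : ℝ) : ℂ)) x := dPCE.mul dX
    rw [fderiv_fun_add (dBE.const_mul _) (dPCEX.const_mul _)]
    rw [ContinuousLinearMap.add_apply]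
    rw [fderiv_const_mul dBE, fderiv_const_mul dPCEX]
    rw [ContinuousLinearMap.smul_apply, ContinuousLinearMap.smul_apply]
    rw [pd_mulC _ _ x dB dE, pd_mulC _ _ x dPCE dX, pd_mulC _ _ x dPC dE]
    rw [pdC_scale _ hPi c x, pdC_scale P hPd c x, Ef_pd, pdC_coord]
    simp only [if_pos rfl, smul_eq_mul]
    push_cast
    linear_combination (4 : ℂ) * (c:ℂ) * Ef μ K x * (μ:ℂ)^2 * ((x i : ℝ):ℂ)^2 *
      ((P (c • x) : ℝ):ℂ) * Complex.I_sq
  rw [Finset.sum_congr rfl (fun i _ => hstep i)]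
  rw [fderiv_dir_sum P (c • x) x]
  unfold Qf
  push_cast [Fin.sum_univ_two]
  ring

end lapH

/-! ### Time derivative of ψ -/

lemma psi_time_hasDeriv (a tstar θ₀ : ℝ) (ha : 0 < a) (P : E2 → ℝ) (hP : ContDiff ℝ (⊤ : ℕ∞) P)
    (x : E2) (t : ℝ) (ht : t < tstar) :
    HasDerivAt (fun s => (((a * (tstar - s))⁻¹ : ℝ) : ℂ) * ((P ((a * (tstar - s))⁻¹ • x) : ℝ) : ℂ) *
        Complex.exp (Complex.I *
          ((θ₀ + (a ^ 2 * (tstar - s))⁻¹ - ‖x‖ ^ 2 / (4 * (tstar - s)) : ℝ) : ℂ)))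
      (Complex.exp (Complex.I *
          ((θ₀ + (a ^ 2 * (tstar - t))⁻¹ - ‖x‖ ^ 2 / (4 * (tstar - t)) : ℝ) : ℂ)) *
        ( ((a * ((a * (tstar - t))⁻¹) ^ 2 : ℝ) : ℂ) * ((P ((a * (tstar - t))⁻¹ • x) : ℝ) : ℂ)
          + (((a * (tstar - t))⁻¹ : ℝ) : ℂ) *
              ((a * ((a * (tstar - t))⁻¹) ^ 2 * fderiv ℝ P ((a * (tstar - t))⁻¹ • x) x : ℝ) : ℂ)
          + (((a * (tstar - t))⁻¹ : ℝ) : ℂ) * ((P ((a * (tstar - t))⁻¹ • x) : ℝ) : ℂ) *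
              Complex.I *
              ((a ^ 2 * ((a ^ 2 * (tstar - t))⁻¹) ^ 2
                - ‖x‖ ^ 2 * (4 * ((4 * (tstar - t))⁻¹) ^ 2) : ℝ) : ℂ) )) t := by
  have h1 : HasDerivAt (fun s : ℝ => (((a * (tstar - s))⁻¹ : ℝ) : ℂ))
      ((a * ((a * (tstar - t))⁻¹) ^ 2 : ℝ) : ℂ) t := (c_hasDeriv a tstar ha t ht).ofReal_comp
  have h2r : HasDerivAt (fun s : ℝ => P ((a * (tstar - s))⁻¹ • x))
      (a * ((a * (tstar - t))⁻¹) ^ 2 * fderiv ℝ P ((a * (tstar - t))⁻¹ • x) x) t := by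
    have hsm : HasDerivAt (fun s : ℝ => (a * (tstar - s))⁻¹ • x)
        ((a * ((a * (tstar - t))⁻¹) ^ 2) • x) t := (c_hasDeriv a tstar ha t ht).smul_const x
    have := (hP.differentiable (by simp) _).hasFDerivAt.comp_hasDerivAt t hsm
    simpa [mul_assoc, Function.comp_def] using this
  have h2 : HasDerivAt (fun s : ℝ => ((P ((a * (tstar - s))⁻¹ • x) : ℝ) : ℂ))
      ((a * ((a * (tstar - t))⁻¹) ^ 2 * fderiv ℝ P ((a * (tstar - t))⁻¹ • x) x : ℝ) : ℂ) t :=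
    h2r.ofReal_comp
  have hθr : HasDerivAt (fun s : ℝ => θ₀ + (a ^ 2 * (tstar - s))⁻¹ - ‖x‖ ^ 2 / (4 * (tstar - s)))
      (a ^ 2 * ((a ^ 2 * (tstar - t))⁻¹) ^ 2 - ‖x‖ ^ 2 * (4 * ((4 * (tstar - t))⁻¹) ^ 2)) t := by
    have ha2 : (0:ℝ) < a ^ 2 := by positivity
    have hA := (c_hasDeriv (a ^ 2) tstar ha2 t ht).const_add θ₀
    have hB := (c_hasDeriv 4 tstar (by norm_num) t ht).const_mul (‖x‖ ^ 2)
    have := hA.fun_sub hB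
    simpa [div_eq_mul_inv] using this
  have hθ : HasDerivAt (fun s : ℝ => Complex.I *
      ((θ₀ + (a ^ 2 * (tstar - s))⁻¹ - ‖x‖ ^ 2 / (4 * (tstar - s)) : ℝ) : ℂ))
      (Complex.I * ((a ^ 2 * ((a ^ 2 * (tstar - t))⁻¹) ^ 2
        - ‖x‖ ^ 2 * (4 * ((4 * (tstar - t))⁻¹) ^ 2) : ℝ) : ℂ)) t :=
    (hθr.ofReal_comp).const_mul Complex.I
  have hexp := hθ.cexp
  have := (h1.fun_mul h2).fun_mul hexp
  refine this.congr_deriv ?_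
  ring

lemma Imul_split (E A B q th : ℂ) :
    Complex.I * (E * (A + B + q * Complex.I * th))
      = E * (Complex.I * A + Complex.I * B - q * th) := by
  linear_combination E * q * th * Complex.I_sq

set_option maxHeartbeats 2000000 in
/-- the exact self-similar blow-up solutions of the 2D Zakharov system. -/
theorem selfsimilar_solution_2d_zakharov (a θ₀ tstar : ℝ) (ha : 0 < a)
    (P N : E2 → ℝ) (p ν : ℝ → ℝ)
    (hpsmooth : ContDiff ℝ (⊤ : ℕ∞) p) (hνsmooth : ContDiff ℝ (⊤ : ℕ∞) ν)
    (hPsmooth : ContDiff ℝ (⊤ : ℕ∞) P) (hNsmooth : ContDiff ℝ (⊤ : ℕ∞) N)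
    (hPrad : ∀ x : E2, P x = p ‖x‖) (hNrad : ∀ x : E2, N x = ν ‖x‖)
    -- the profile equation ΔP − P − NP = 0
    (hODE1 : ∀ x : E2, laplacian2 P x - P x - N x * P x = 0)
    -- the profile equation a²(η²ν'' + 6ην' + 6ν) − ΔN = Δ(P²), with η = |x|
    (hODE2 : ∀ x : E2,
      a ^ 2 * (‖x‖ ^ 2 * deriv (deriv ν) ‖x‖ + 6 * ‖x‖ * deriv ν ‖x‖ + 6 * ν ‖x‖)
          - laplacian2 N x
        = laplacian2 (fun y => P y ^ 2) x)
    (ψ : E2 → ℝ → ℂ) (n : E2 → ℝ → ℝ)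
    (hψ : ∀ (x : E2) (t : ℝ), t < tstar →
      ψ x t = (((a * (tstar - t))⁻¹ : ℝ) : ℂ) * (P ((a * (tstar - t))⁻¹ • x) : ℂ) *
        Complex.exp (Complex.I *
          ((θ₀ + (a ^ 2 * (tstar - t))⁻¹ - ‖x‖ ^ 2 / (4 * (tstar - t)) : ℝ) : ℂ)))
    (hn : ∀ (x : E2) (t : ℝ), t < tstar →
      n x t = ((a * (tstar - t)) ^ 2)⁻¹ * N ((a * (tstar - t))⁻¹ • x)) :
    ∀ (x : E2) (t : ℝ), t < tstar →
      -- i∂ₜψ + Δψ = nψ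
      (Complex.I * deriv (fun s => ψ x s) t + laplacian2 (fun y => ψ y t) x
          = (n x t : ℂ) * ψ x t) ∧
      -- ∂ₜₜn − Δn = Δ|ψ|²
      (deriv (fun s => deriv (fun s' => n x s') s) t - laplacian2 (fun y => n y t) x
          = laplacian2 (fun y => ‖ψ y t‖ ^ 2) x) := by

  intro x t ht
  have hτ : 0 < tstar - t := sub_pos.mpr ht
  have hcpos : 0 < (a * (tstar - t))⁻¹ := by positivity
  have hKμ : ∀ w : E2,
      ((θ₀ + (a ^ 2 * (tstar - t))⁻¹ - ‖w‖ ^ 2 / (4 * (tstar - t)) : ℝ) : ℂ)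
        = (((θ₀ + (a ^ 2 * (tstar - t))⁻¹) - (4 * (tstar - t))⁻¹ * Qf w : ℝ) : ℂ) := by
    intro w
    have : (θ₀ + (a ^ 2 * (tstar - t))⁻¹ - ‖w‖ ^ 2 / (4 * (tstar - t)) : ℝ)
        = ((θ₀ + (a ^ 2 * (tstar - t))⁻¹) - (4 * (tstar - t))⁻¹ * Qf w : ℝ) := by
      rw [← norm_sq_Qf w, div_eq_mul_inv]; ring
    rw [this]
  constructor
  · -- Schrödinger equation
    have hfun1 : (fun y => ψ y t)
        = fun w => (((a * (tstar - t))⁻¹ : ℝ) : ℂ) * ((P ((a * (tstar - t))⁻¹ • w) : ℝ) : ℂ) *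
            Ef ((4 * (tstar - t))⁻¹) (θ₀ + (a ^ 2 * (tstar - t))⁻¹) w := by
      funext w
      rw [hψ w t ht]
      unfold Ef
      rw [hKμ w]
    have hev : (fun s => ψ x s) =ᶠ[nhds t] (fun s =>
        (((a * (tstar - s))⁻¹ : ℝ) : ℂ) * ((P ((a * (tstar - s))⁻¹ • x) : ℝ) : ℂ) *
          Complex.exp (Complex.I *
            ((θ₀ + (a ^ 2 * (tstar - s))⁻¹ - ‖x‖ ^ 2 / (4 * (tstar - s)) : ℝ) : ℂ))) := by
      filter_upwards [eventually_lt_nhds ht] with s hs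
      exact hψ x s hs
    have hder := hev.deriv_eq
    rw [(psi_time_hasDeriv a tstar θ₀ ha P hPsmooth x t ht).deriv] at hder
    rw [hder, hfun1, lap_h hPsmooth ((a * (tstar - t))⁻¹) ((4 * (tstar - t))⁻¹)
      (θ₀ + (a ^ 2 * (tstar - t))⁻¹) x, hn x t ht, hψ x t ht]
    have hexpEf : Complex.exp (Complex.I *
        ((θ₀ + (a ^ 2 * (tstar - t))⁻¹ - ‖x‖ ^ 2 / (4 * (tstar - t)) : ℝ) : ℂ))
        = Ef ((4 * (tstar - t))⁻¹) (θ₀ + (a ^ 2 * (tstar - t))⁻¹) x := by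
      unfold Ef
      rw [hKμ x]
    rw [hexpEf]
    rw [Imul_split]
    have hL : laplacian2 P ((a * (tstar - t))⁻¹ • x)
        = P ((a * (tstar - t))⁻¹ • x)
          + N ((a * (tstar - t))⁻¹ • x) * P ((a * (tstar - t))⁻¹ • x) := by
      have := hODE1 ((a * (tstar - t))⁻¹ • x); linarith
    rw [hL]
    rw [norm_sq_Qf x]
    have ha' : (a : ℂ) ≠ 0 := by exact_mod_cast ha.ne'
    have hτ' : ((tstar : ℂ) - (t : ℂ)) ≠ 0 := by
      have : ((tstar - t : ℝ) : ℂ) ≠ 0 := by exact_mod_cast hτ.ne'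
      push_cast at this
      exact this
    have hane : a ≠ 0 := ha.ne'
    have hτne : tstar - t ≠ 0 := hτ.ne'
    have hr1 : a * ((a * (tstar - t))⁻¹) ^ 2
        = 4 * (4 * (tstar - t))⁻¹ * (a * (tstar - t))⁻¹ := by
      field_simp
    have hr2 : a * ((a * (tstar - t))⁻¹) ^ 2 * (a * (tstar - t))⁻¹
        = 4 * (4 * (tstar - t))⁻¹ * ((a * (tstar - t))⁻¹) ^ 2 := by
      field_simp
    have hr3 : a ^ 2 * ((a ^ 2 * (tstar - t))⁻¹) ^ 2 = ((a * (tstar - t))⁻¹) ^ 2 := by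
      field_simp
    have hr4 : ((a * (tstar - t)) ^ 2)⁻¹ = ((a * (tstar - t))⁻¹) ^ 2 := (inv_pow _ 2).symm
    have hc1 : (a:ℂ) * (((a:ℂ) * ((tstar:ℂ) - (t:ℂ)))⁻¹) ^ 2
        = 4 * ((4:ℂ) * ((tstar:ℂ) - (t:ℂ)))⁻¹ * (((a:ℂ) * ((tstar:ℂ) - (t:ℂ)))⁻¹) := by
      exact_mod_cast hr1
    have hc2 : (a:ℂ) * (((a:ℂ) * ((tstar:ℂ) - (t:ℂ)))⁻¹) ^ 2 * (((a:ℂ) * ((tstar:ℂ) - (t:ℂ)))⁻¹)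
        = 4 * ((4:ℂ) * ((tstar:ℂ) - (t:ℂ)))⁻¹ * (((a:ℂ) * ((tstar:ℂ) - (t:ℂ)))⁻¹) ^ 2 := by
      exact_mod_cast hr2
    have hc3 : (a:ℂ) ^ 2 * (((a:ℂ) ^ 2 * ((tstar:ℂ) - (t:ℂ)))⁻¹) ^ 2
        = (((a:ℂ) * ((tstar:ℂ) - (t:ℂ)))⁻¹) ^ 2 := by
      exact_mod_cast hr3
    have hc4 : (((a:ℂ) * ((tstar:ℂ) - (t:ℂ))) ^ 2)⁻¹ = (((a:ℂ) * ((tstar:ℂ) - (t:ℂ)))⁻¹) ^ 2 := by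
      exact_mod_cast hr4
    push_cast
    linear_combination
      Complex.I * (Ef ((4 * (tstar - t))⁻¹) (θ₀ + (a ^ 2 * (tstar - t))⁻¹) x) *
          ((P ((a * (tstar - t))⁻¹ • x) : ℝ) : ℂ) * hc1
        + Complex.I * (Ef ((4 * (tstar - t))⁻¹) (θ₀ + (a ^ 2 * (tstar - t))⁻¹) x) *
            ((fderiv ℝ P ((a * (tstar - t))⁻¹ • x) x : ℝ) : ℂ) * hc2
        - (Ef ((4 * (tstar - t))⁻¹) (θ₀ + (a ^ 2 * (tstar - t))⁻¹) x) *
            (((a:ℂ) * ((tstar:ℂ) - (t:ℂ)))⁻¹) * ((P ((a * (tstar - t))⁻¹ • x) : ℝ) : ℂ) * hc3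
        - (Ef ((4 * (tstar - t))⁻¹) (θ₀ + (a ^ 2 * (tstar - t))⁻¹) x) *
            (((a:ℂ) * ((tstar:ℂ) - (t:ℂ)))⁻¹) * ((N ((a * (tstar - t))⁻¹ • x) : ℝ) : ℂ) *
            ((P ((a * (tstar - t))⁻¹ • x) : ℝ) : ℂ) * hc4
  · -- wave equation
    rw [n_second_deriv a tstar ha hNsmooth x n (fun s hs => hn x s hs) t ht]
    have hfunN : (fun z => n z t)
        = fun z => ((a * (tstar - t))⁻¹) ^ 2 * N ((a * (tstar - t))⁻¹ • z) := by
      funext z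
      rw [hn z t ht, inv_pow]
    have hfunS : (fun z => ‖ψ z t‖ ^ 2)
        = fun z => ((a * (tstar - t))⁻¹) ^ 2 *
            ((fun w => P w ^ 2) ((a * (tstar - t))⁻¹ • z)) := by
      funext z
      rw [hψ z t ht]
      rw [norm_mul, norm_mul]
      have h1 : ‖Complex.exp (Complex.I *
          ((θ₀ + (a ^ 2 * (tstar - t))⁻¹ - ‖z‖ ^ 2 / (4 * (tstar - t)) : ℝ) : ℂ))‖ = 1 := by
        rw [Complex.norm_exp]
        have h0 : (Complex.I *
            ((θ₀ + (a ^ 2 * (tstar - t))⁻¹ - ‖z‖ ^ 2 / (4 * (tstar - t)) : ℝ) : ℂ)).re = 0 := by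
          simp only [Complex.mul_re, Complex.ofReal_im, Complex.ofReal_re, Complex.I_re,
            Complex.I_im, zero_mul, one_mul, mul_zero, sub_zero, zero_sub, neg_zero, mul_one]
        rw [h0, Real.exp_zero]
      rw [h1, mul_one, Complex.norm_real, Complex.norm_real]
      simp only [Real.norm_eq_abs, abs_of_pos hcpos]
      rw [mul_pow, _root_.sq_abs]
    rw [hfunN, hfunS, lap_scale N hNsmooth _ _ x, lap_scale (fun w => P w ^ 2) (hPsmooth.pow 2) _ _ x]
    have f1 : (a * (tstar - t))⁻¹ * fderiv ℝ N ((a * (tstar - t))⁻¹ • x) x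
        = ‖(a * (tstar - t))⁻¹ • x‖ * deriv ν ‖(a * (tstar - t))⁻¹ • x‖ := by
      have h := radial_d1 hNsmooth hνsmooth hNrad ((a * (tstar - t))⁻¹ • x)
      rwa [ContinuousLinearMap.map_smul, smul_eq_mul] at h
    have f2 : ((a * (tstar - t))⁻¹) ^ 2 *
          fderiv ℝ (fun z => fderiv ℝ N z x) ((a * (tstar - t))⁻¹ • x) x
        = ‖(a * (tstar - t))⁻¹ • x‖ ^ 2 * deriv (deriv ν) ‖(a * (tstar - t))⁻¹ • x‖ := by
      have h := radial_d2 hNsmooth hνsmooth hNrad ((a * (tstar - t))⁻¹ • x)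
      rw [fderiv2_clm hNsmooth _ _, ContinuousLinearMap.flip_apply, second_smul] at h
      rw [fderiv2_clm hNsmooth _ _, ContinuousLinearMap.flip_apply]
      linarith
    have f3 := hODE2 ((a * (tstar - t))⁻¹ • x)
    have f4 := hNrad ((a * (tstar - t))⁻¹ • x)
    linear_combination (((a * (tstar - t))⁻¹) ^ 4) * f3
      + (6 * a ^ 2 * ((a * (tstar - t))⁻¹) ^ 4) * f4
      + (6 * a ^ 2 * ((a * (tstar - t))⁻¹) ^ 4) * f1
      + (a ^ 2 * ((a * (tstar - t))⁻¹) ^ 4) * f2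
end
end
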